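/- Let D = {(t, a) ∈ l¹ × ℝ : t is a probability sequence, Σ_{n=0}^∞ n·t_n < ∞, and a = Σ_{n=0}^∞ n·t_n}. Then D is a convex subset of l¹ × ℝ, and the function (t, a) ↦ Σ_{n=0}^∞ t_n ln t_n (which is well-defined and finite on D) is convex on D. -/

import Mathlib

/-!
Mixing two points of `D` preserves every defining constraint, since each is linear in `(t, a)`
once the series involved are known to converge. The entropy is the sum over `n` of the convex
function `x ↦ x log x` evaluated at the coordinate `t_n`, hence convex as soon as the series
converges on `D`; convergence follows from the elementary bound `-t log t ≤ n t + e^{-(n+1)}`,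
which makes a finite first moment control the entropy series.
-/

open Real

/-- The maximum of `t ↦ -t log t - c t` is `e^{-(c+1)}`, attained at `t = e^{-(c+1)}`. -/
lemma Real.negMulLog_le_mul_add_exp {t : ℝ} (ht : 0 ≤ t) (c : ℝ) :
    negMulLog t ≤ c * t + exp (-(c + 1)) := by
  rcases ht.eq_or_lt with rfl | ht
  · simp [(exp_pos _).le]
  have key := add_one_le_exp (-log t - c - 1)
  rw [show -log t - c - 1 = -(c + 1) - log t by ring, exp_sub, exp_log ht, le_div_iff₀ ht] at key
  rw [negMulLog]
  nlinarith

lemma summable_mul_log_of_summable_nat_mul {t : ℕ → ℝ} (h0 : ∀ n, 0 ≤ t n) (h1 : ∀ n, t n ≤ 1)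
    (hmom : Summable fun n : ℕ => (n : ℝ) * t n) :
    Summable fun n => t n * log (t n) := by
  have hexp : Summable fun n : ℕ => exp (-((n : ℝ) + 1)) := by
    simpa [neg_add, exp_add] using summable_exp_neg_nat.mul_left (exp (-1))
  have hneg : Summable fun n => negMulLog (t n) :=
    (hmom.add hexp).of_nonneg_of_le (fun n => negMulLog_nonneg (h0 n) (h1 n))
      fun n => negMulLog_le_mul_add_exp (h0 n) n
  simpa [negMulLog] using hneg.neg

lemma tsum_mul_add_mul {ι : Type*} {f g : ι → ℝ} (hf : Summable f) (hg : Summable g) (a b : ℝ) :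
    ∑' i, (a * f i + b * g i) = a * ∑' i, f i + b * ∑' i, g i := by
  rw [(hf.mul_left a).tsum_add (hg.mul_left b), tsum_mul_left, tsum_mul_left]

theorem ConvexOn.tsum {ι E : Type*} [AddCommMonoid E] [Module ℝ E] {s : Set E}
    {f : ι → E → ℝ} (hs : Convex ℝ s) (hf : ∀ i, ConvexOn ℝ s (f i))
    (hsum : ∀ x ∈ s, Summable fun i => f i x) :
    ConvexOn ℝ s fun x => ∑' i, f i x := by
  refine ⟨hs, fun x hx y hy a b ha hb hab => ?_⟩
  calc ∑' i, f i (a • x + b • y) ≤ ∑' i, (a * f i x + b * f i y) :=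
        Summable.tsum_le_tsum (fun i => (hf i).2 hx hy ha hb hab) (hsum _ (hs hx hy ha hb hab))
          (((hsum x hx).mul_left a).add ((hsum y hy).mul_left b))
    _ = a • ∑' i, f i x + b • ∑' i, f i y := tsum_mul_add_mul (hsum x hx) (hsum y hy) a b

def probWithMean : Set (lp (fun _ : ℕ => ℝ) 1 × ℝ) :=
  {p | (∀ n, 0 ≤ p.1 n) ∧ (∑' n, p.1 n) = 1 ∧
    Summable (fun n : ℕ => (n : ℝ) * p.1 n) ∧ p.2 = ∑' n : ℕ, (n : ℝ) * p.1 n}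

lemma lp_one_fst_smul_add_smul_apply (p q : lp (fun _ : ℕ => ℝ) 1 × ℝ) (a b : ℝ) (n : ℕ) :
    (a • p + b • q).1 n = a * p.1 n + b * q.1 n :=
  rfl

lemma le_one_of_mem_probWithMean {p : lp (fun _ : ℕ => ℝ) 1 × ℝ} (hp : p ∈ probWithMean)
    (n : ℕ) : p.1 n ≤ 1 :=
  ((Memℓp.summable_of_one p.1.2).le_tsum n fun m _ => hp.1 m).trans_eq hp.2.1

theorem convex_probWithMean : Convex ℝ probWithMean := by
  rintro p ⟨hp0, hp1, hpm, hpa⟩ q ⟨hq0, hq1, hqm, hqa⟩ a b ha hb hab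
  simp only [probWithMean, Set.mem_ofPred_eq, lp_one_fst_smul_add_smul_apply]
  refine ⟨fun n => add_nonneg (mul_nonneg ha (hp0 n)) (mul_nonneg hb (hq0 n)), ?_, ?_, ?_⟩
  · rw [tsum_mul_add_mul (Memℓp.summable_of_one p.1.2) (Memℓp.summable_of_one q.1.2), hp1, hq1,
      mul_one, mul_one, hab]
  · exact ((hpm.mul_left a).add (hqm.mul_left b)).congr fun n => by ring
  · rw [Prod.snd_add, Prod.smul_snd, Prod.smul_snd, smul_eq_mul, smul_eq_mul, hpa, hqa,
      ← tsum_mul_add_mul hpm hqm]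
    exact tsum_congr fun n => by ring

theorem convexOn_entropy_probWithMean :
    ConvexOn ℝ probWithMean fun p => ∑' n, p.1 n * log (p.1 n) := by
  refine ConvexOn.tsum convex_probWithMean (fun n => ?_) fun p hp => ?_
  · exact (convexOn_mul_log.comp_linearMap ((lp.evalₗ _ 1 n).comp (LinearMap.fst ℝ _ ℝ))).subset
      (fun p hp => hp.1 n) convex_probWithMean
  · exact summable_mul_log_of_summable_nat_mul hp.1 (le_one_of_mem_probWithMean hp) hp.2.2.1

/-- The set `D = {(t,a) ∈ l¹ × ℝ : t is a probability sequence,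
Σ n t_n < ∞ and a = Σ n t_n}` is convex, and the entropy function
`(t,a) ↦ Σ t_n ln t_n` is convex on `D`. -/
theorem stmt12
    (D : Set (lp (fun _ : ℕ => ℝ) 1 × ℝ))
    (hD : D = {p | (∀ n, 0 ≤ p.1 n) ∧ (∑' n, p.1 n) = 1 ∧
      Summable (fun n : ℕ => (n : ℝ) * p.1 n) ∧ p.2 = ∑' n : ℕ, (n : ℝ) * p.1 n}) :
    Convex ℝ D ∧
    ConvexOn ℝ D (fun p => ∑' n, p.1 n * Real.log (p.1 n)) := by
  subst hD
  exact ⟨convex_probWithMean, convexOn_entropy_probWithMean⟩
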